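/- (Commutative case of Theorem 3.7.) Let (Ω,Σ,μ) be a σ-finite measure space and let a_n : L^∞(Ω,μ;ℂ) → L⁰(Ω,μ;ℂ) be a sequence of additive maps which is uniformly equicontinuous at 0 on the unit ball { x ∈ L^∞ : ‖x‖_∞ ≤ 1 }. Then the set C = { x ∈ L^∞ : ‖x‖_∞ ≤ 1 and (a_n(x))_n converges almost uniformly } is sequentially closed in the unit ball with respect to the measure topology: if x_k ∈ C, ‖x‖_∞ ≤ 1, and x_k → x in the measure topology, then (a_n(x))_n converges almost uniformly. -/

import Mathlib

/-!
Write `x = x_K + 2y` with `y = (x - x_K)/2`. Once `x_K` is close to `x` in measure, `y` is a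
point of the unit ball that is uniformly small off a set of small measure, so by equicontinuity
all the `a_n(y)` are uniformly small off a small set, simultaneously in `n`. Thus `a_n(x)` is,
off a small set, uniformly close to the almost uniformly convergent sequence `a_n(x_K)`, hence
almost uniformly Cauchy. An almost uniformly Cauchy sequence is Cauchy almost everywhere (the set
where it is not Cauchy has arbitrarily small measure), and it converges almost uniformly to its
pointwise limit.
-/

open MeasureTheory Filter Topology
open scoped ENNReal

/-- `gs k → g` in the measure topology. -/
def TendstoMeasTop {Ω : Type*} [MeasurableSpace Ω] (μ : Measure Ω)
    (gs : ℕ → Ω → ℂ) (g : Ω → ℂ) : Prop :=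
  ∀ ε δ : ℝ, 0 < ε → 0 < δ → ∃ K : ℕ, ∀ k ≥ K, ∃ E : Set Ω, MeasurableSet E ∧
    μ Eᶜ ≤ ENNReal.ofReal ε ∧ ∀ᵐ ω ∂μ.restrict E, ‖gs k ω - g ω‖ ≤ δ

/-- `gs n → g` almost uniformly. -/
def ConvAU {Ω : Type*} [MeasurableSpace Ω] (μ : Measure Ω) (gs : ℕ → Ω → ℂ) (g : Ω → ℂ) :
    Prop :=
  ∀ ε : ℝ, 0 < ε → ∃ E : Set Ω, MeasurableSet E ∧ μ Eᶜ ≤ ENNReal.ofReal ε ∧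
    Filter.Tendsto (fun n => essSup (fun ω => (‖gs n ω - g ω‖₊ : ℝ≥0∞)) (μ.restrict E))
      Filter.atTop (nhds 0)

/-- Uniform equicontinuity at `0` on `E ⊆ L^∞` of the maps `a_n : L^∞ → L⁰`. -/
def UnifEquicont {Ω : Type*} [MeasurableSpace Ω] (μ : Measure Ω)
    (a : ℕ → (Lp ℂ ⊤ μ) → (Ω →ₘ[μ] ℂ)) (E : Set (Lp ℂ ⊤ μ)) : Prop :=
  ∀ ε δ : ℝ, 0 < ε → 0 < δ → ∃ γ : ℝ, 0 < γ ∧ ∀ x ∈ E,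
    (∃ F : Set Ω, MeasurableSet F ∧ μ Fᶜ ≤ ENNReal.ofReal γ ∧
      ∀ᵐ ω ∂μ.restrict F, ‖(x : Ω → ℂ) ω‖ ≤ γ) →
    ∃ G : Set Ω, MeasurableSet G ∧ μ Gᶜ ≤ ENNReal.ofReal ε ∧
      ∀ n, essSup (fun ω => (‖(a n x : Ω → ℂ) ω‖₊ : ℝ≥0∞)) (μ.restrict G) ≤
        ENNReal.ofReal δ

section AlmostUniform

variable {Ω : Type*} [MeasurableSpace Ω] {μ : Measure Ω}

lemma essSup_enorm_le_ofReal_iff {F : Type*} [NormedAddCommGroup F] {f : Ω → F} {δ : ℝ}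
    (hδ : 0 ≤ δ) :
    essSup (fun ω => (‖f ω‖₊ : ℝ≥0∞)) μ ≤ ENNReal.ofReal δ ↔ ∀ᵐ ω ∂μ, ‖f ω‖ ≤ δ := by
  simp_rw [← enorm_eq_nnnorm, ← ofReal_norm]
  constructor
  · intro h
    filter_upwards [ENNReal.ae_le_essSup fun ω => ENNReal.ofReal ‖f ω‖] with ω hω
    exact (ENNReal.ofReal_le_ofReal_iff hδ).1 (hω.trans h)
  · intro h
    exact essSup_le_of_ae_le _ (h.mono fun ω hω => ENNReal.ofReal_le_ofReal hω)

lemma ae_of_forall_ae_restrict {P : Ω → Prop}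
    (h : ∀ ε : ℝ, 0 < ε → ∃ E : Set Ω, μ Eᶜ ≤ ENNReal.ofReal ε ∧ ∀ᵐ ω ∂μ.restrict E, P ω) :
    ∀ᵐ ω ∂μ, P ω := by
  refine le_antisymm (ENNReal.le_of_forall_pos_le_add fun ε hε _ => ?_) zero_le
  obtain ⟨E, hEμ, hE⟩ := h ε hε
  calc μ {ω | ¬P ω} ≤ μ ({ω | ¬P ω} ∩ E) + μ ({ω | ¬P ω} \ E) := measure_le_inter_add_sdiff _ _ _
    _ ≤ μ.restrict E {ω | ¬P ω} + μ Eᶜ :=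
        add_le_add (Measure.le_restrict_apply _ _) (measure_mono (Set.sdiff_subset_compl _ _))
    _ = 0 + μ Eᶜ := by rw [ae_iff.1 hE]
    _ ≤ 0 + ε := add_le_add le_rfl (hEμ.trans_eq ENNReal.ofReal_coe_nnreal)

lemma measure_compl_inter_le_ofReal {s t : Set Ω} {ε : ℝ} (hε : 0 ≤ ε)
    (hs : μ sᶜ ≤ ENNReal.ofReal (ε / 2)) (ht : μ tᶜ ≤ ENNReal.ofReal (ε / 2)) :
    μ (s ∩ t)ᶜ ≤ ENNReal.ofReal ε := by
  calc μ (s ∩ t)ᶜ ≤ μ sᶜ + μ tᶜ := by rw [Set.compl_inter]; exact measure_union_le _ _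
    _ ≤ ENNReal.ofReal (ε / 2) + ENNReal.ofReal (ε / 2) := add_le_add hs ht
    _ = ENNReal.ofReal ε := by rw [← ENNReal.ofReal_add (by linarith) (by linarith), add_halves]

section AUCauchy

variable {F : Type*} [NormedAddCommGroup F]

def AUCauchy (μ : Measure Ω) (f : ℕ → Ω → F) : Prop :=
  ∀ ε δ : ℝ, 0 < ε → 0 < δ → ∃ E : Set Ω, MeasurableSet E ∧ μ Eᶜ ≤ ENNReal.ofReal ε ∧
    ∃ N : ℕ, ∀ n ≥ N, ∀ m ≥ N, ∀ᵐ ω ∂μ.restrict E, ‖f n ω - f m ω‖ ≤ δ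

lemma AUCauchy.exists_uniformCauchy {f : ℕ → Ω → F} (hf : AUCauchy μ f) {ε : ℝ} (hε : 0 < ε) :
    ∃ E : Set Ω, MeasurableSet E ∧ μ Eᶜ ≤ ENNReal.ofReal ε ∧ ∃ N : ℕ → ℕ,
      ∀ᵐ ω ∂μ.restrict E, ∀ j, ∀ n ≥ N j, ∀ m ≥ N j, ‖f n ω - f m ω‖ ≤ 1 / (j + 1) := by
  obtain ⟨ε', hε'_pos, hε'_sum⟩ :=
    ENNReal.exists_pos_sum_of_countable (ENNReal.ofReal_pos.2 hε).ne' ℕ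
  choose E hE hEμ N hN using fun j : ℕ => hf (ε' j) (1 / (j + 1)) (hε'_pos j) (by positivity)
  refine ⟨⋂ j, E j, .iInter hE, ?_, N, ?_⟩
  · rw [Set.compl_iInter]
    calc μ (⋃ j, (E j)ᶜ) ≤ ∑' j, μ (E j)ᶜ := measure_iUnion_le _
      _ ≤ ∑' j, (ε' j : ℝ≥0∞) :=
          ENNReal.tsum_le_tsum fun j => (hEμ j).trans_eq ENNReal.ofReal_coe_nnreal
      _ ≤ ENNReal.ofReal ε := hε'_sum.le
  · simp only [ae_all_iff, eventually_imp_distrib_left]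
    exact fun j n hn m hm => ae_restrict_of_ae_restrict_of_subset (Set.iInter_subset _ j) (hN j n hn m hm)

lemma AUCauchy.ae_cauchySeq {f : ℕ → Ω → F} (hf : AUCauchy μ f) :
    ∀ᵐ ω ∂μ, CauchySeq fun n => f n ω := by
  refine ae_of_forall_ae_restrict fun ε hε => ?_
  obtain ⟨E, -, hEμ, N, hN⟩ := hf.exists_uniformCauchy hε
  refine ⟨E, hEμ, hN.mono fun ω hω => Metric.cauchySeq_iff.2 fun η hη => ?_⟩
  obtain ⟨j, hj⟩ := exists_nat_one_div_lt hη
  exact ⟨N j, fun n hn m hm => by rw [dist_eq_norm]; exact (hω j n hn m hm).trans_lt hj⟩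

lemma AUCauchy.convAU_of_ae_tendsto {f : ℕ → Ω → ℂ} {g : Ω → ℂ} (hf : AUCauchy μ f)
    (hg : ∀ᵐ ω ∂μ, Tendsto (fun n => f n ω) atTop (𝓝 (g ω))) : ConvAU μ f g := by
  intro ε hε
  obtain ⟨E, hE, hEμ, N, hN⟩ := hf.exists_uniformCauchy hε
  refine ⟨E, hE, hEμ, ENNReal.tendsto_atTop_zero.2 fun η hη => ?_⟩
  obtain ⟨r, -, hr_pos, hrη⟩ := ENNReal.lt_iff_exists_real_btwn.1 hη
  obtain ⟨j, hj⟩ := exists_nat_one_div_lt (ENNReal.ofReal_pos.1 hr_pos)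
  refine ⟨N j, fun n hn => ?_⟩
  have hbound : ∀ᵐ ω ∂μ.restrict E, ‖f n ω - g ω‖ ≤ 1 / (j + 1) := by
    filter_upwards [hN, ae_restrict_of_ae hg] with ω hω hgω
    exact le_of_tendsto ((tendsto_const_nhds.sub hgω).norm)
      (eventually_atTop.2 ⟨N j, fun m hm => hω j n hn m hm⟩)
  calc essSup (fun ω => (‖f n ω - g ω‖₊ : ℝ≥0∞)) (μ.restrict E)
      ≤ ENNReal.ofReal (1 / (j + 1)) := (essSup_enorm_le_ofReal_iff (by positivity)).2 hbound
    _ ≤ η := (ENNReal.ofReal_le_ofReal hj.le).trans hrη.le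

lemma AUCauchy.exists_convAU {f : ℕ → Ω → ℂ} (hf : AUCauchy μ f)
    (hf_meas : ∀ n, AEMeasurable (f n) μ) : ∃ g : Ω → ℂ, Measurable g ∧ ConvAU μ f g := by
  obtain ⟨g, hg_meas, hg⟩ := measurable_limit_of_tendsto_metrizable_ae hf_meas
    (hf.ae_cauchySeq.mono fun _ => cauchySeq_tendsto_of_complete)
  exact ⟨g, hg_meas, hf.convAU_of_ae_tendsto hg⟩

lemma ConvAU.auCauchy {f : ℕ → Ω → ℂ} {g : Ω → ℂ} (hf : ConvAU μ f g) : AUCauchy μ f := by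
  intro ε δ hε hδ
  obtain ⟨E, hE, hEμ, hlim⟩ := hf ε hε
  obtain ⟨N, hN⟩ := ENNReal.tendsto_atTop_zero.1 hlim (ENNReal.ofReal (δ / 2)) (by positivity)
  have hclose : ∀ n ≥ N, ∀ᵐ ω ∂μ.restrict E, ‖f n ω - g ω‖ ≤ δ / 2 := fun n hn =>
    (essSup_enorm_le_ofReal_iff (by positivity)).1 (hN n hn)
  refine ⟨E, hE, hEμ, N, fun n hn m hm => ?_⟩
  filter_upwards [hclose n hn, hclose m hm] with ω hn hm
  calc ‖f n ω - f m ω‖ = ‖(f n ω - g ω) - (f m ω - g ω)‖ := by rw [sub_sub_sub_cancel_right]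
    _ ≤ ‖f n ω - g ω‖ + ‖f m ω - g ω‖ := norm_sub_le _ _
    _ ≤ δ := by linarith
lemma AUCauchy.of_approx {f : ℕ → Ω → F}
    (happrox : ∀ ε δ : ℝ, 0 < ε → 0 < δ → ∃ h : ℕ → Ω → F, AUCauchy μ h ∧
      ∃ G : Set Ω, MeasurableSet G ∧ μ Gᶜ ≤ ENNReal.ofReal ε ∧
        ∀ n, ∀ᵐ ω ∂μ.restrict G, ‖f n ω - h n ω‖ ≤ δ) :
    AUCauchy μ f := by
  intro ε δ hε hδ
  obtain ⟨h, hh, G, hG, hGμ, hfh⟩ := happrox (ε / 2) (δ / 3) (by positivity) (by positivity)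
  obtain ⟨E, hE, hEμ, N, hN⟩ := hh (ε / 2) (δ / 3) (by positivity) (by positivity)
  refine ⟨G ∩ E, hG.inter hE, measure_compl_inter_le_ofReal hε.le hGμ hEμ, N,
    fun n hn m hm => ?_⟩
  filter_upwards [ae_restrict_of_ae_restrict_of_subset Set.inter_subset_left (hfh n),
    ae_restrict_of_ae_restrict_of_subset Set.inter_subset_left (hfh m),
    ae_restrict_of_ae_restrict_of_subset Set.inter_subset_right (hN n hn m hm)] with ω hn hm hnm
  calc ‖f n ω - f m ω‖ = ‖(f n ω - h n ω) + (h n ω - h m ω) - (f m ω - h m ω)‖ := by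
        congr 1; abel
    _ ≤ ‖f n ω - h n ω‖ + ‖h n ω - h m ω‖ + ‖f m ω - h m ω‖ :=
        (norm_sub_le _ _).trans (add_le_add_left (norm_add_le _ _) _)
    _ ≤ δ := by linarith

end AUCauchy

lemma norm_half_smul_sub_le_one {E : Type*} [SeminormedAddCommGroup E] [NormedSpace ℂ E]
    {x z : E} (hx : ‖x‖ ≤ 1) (hz : ‖z‖ ≤ 1) : ‖(2⁻¹ : ℂ) • (x - z)‖ ≤ 1 := by
  rw [norm_smul, norm_inv, Complex.norm_two]
  linarith [norm_sub_le x z]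

lemma ae_restrict_norm_half_smul_sub_le {p : ℝ≥0∞} {x z : Lp ℂ p μ} {F : Set Ω} {γ : ℝ}
    (hγ : 0 ≤ γ) (hxz : ∀ᵐ ω ∂μ.restrict F, ‖(z : Ω → ℂ) ω - (x : Ω → ℂ) ω‖ ≤ γ) :
    ∀ᵐ ω ∂μ.restrict F, ‖((2⁻¹ : ℂ) • (x - z) : Lp ℂ p μ) ω‖ ≤ γ := by
  filter_upwards [ae_restrict_of_ae (Lp.coeFn_smul (2⁻¹ : ℂ) (x - z)),
    ae_restrict_of_ae (Lp.coeFn_sub x z), hxz] with ω hsmul hsub hω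
  rw [hsmul, Pi.smul_apply, hsub, Pi.sub_apply, norm_smul, norm_sub_rev, norm_inv,
    Complex.norm_two]
  linarith

lemma map_eq_add_half_smul_sub {E M : Type*} [AddCommGroup E] [Module ℂ E] [Add M]
    {φ : E → M} (hφ : ∀ u v, φ (u + v) = φ u + φ v) (x z : E) :
    φ x = φ z + (φ ((2⁻¹ : ℂ) • (x - z)) + φ ((2⁻¹ : ℂ) • (x - z))) := by
  have hsplit : z + ((2⁻¹ : ℂ) • (x - z) + (2⁻¹ : ℂ) • (x - z)) = x := by
    rw [← add_smul, show (2⁻¹ + 2⁻¹ : ℂ) = 1 by norm_num, one_smul, add_sub_cancel]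
  rw [← hφ, ← hφ, hsplit]

end AlmostUniform

theorem stmt_17_general {Ω : Type*} [MeasurableSpace Ω] (μ : Measure Ω)
    (a : ℕ → (Lp ℂ ⊤ μ) → (Ω →ₘ[μ] ℂ))
    (ha_add : ∀ n (x y : Lp ℂ ⊤ μ), a n (x + y) = a n x + a n y)
    (h : UnifEquicont μ a {x : Lp ℂ ⊤ μ | ‖x‖ ≤ 1})
    (xs : ℕ → Lp ℂ ⊤ μ) (x : Lp ℂ ⊤ μ)
    (hxs_ball : ∀ k, ‖xs k‖ ≤ 1)
    (hxs_conv : ∀ k, ∃ g : Ω → ℂ, Measurable g ∧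
      ConvAU μ (fun n ω => (a n (xs k) : Ω → ℂ) ω) g)
    (hx_ball : ‖x‖ ≤ 1)
    (hxs_x : TendstoMeasTop μ (fun k ω => (xs k : Ω → ℂ) ω) (fun ω => (x : Ω → ℂ) ω)) :
    ∃ g : Ω → ℂ, Measurable g ∧ ConvAU μ (fun n ω => (a n x : Ω → ℂ) ω) g := by
  refine AUCauchy.exists_convAU (AUCauchy.of_approx fun ε δ hε hδ => ?_)
    fun n => (a n x).aemeasurable
  obtain ⟨γ, hγ, hsmall⟩ := h ε (δ / 2) hε (by positivity)
  obtain ⟨K, hK⟩ := hxs_x γ γ hγ hγ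
  obtain ⟨F, hF, hFμ, hFx⟩ := hK K le_rfl
  -- `x - xs K` may have norm `2`, so it is halved to land in the unit ball.
  set y : Lp ℂ ⊤ μ := (2⁻¹ : ℂ) • (x - xs K)
  obtain ⟨G, hG, hGμ, hGy⟩ := hsmall y (norm_half_smul_sub_le_one hx_ball (hxs_ball K))
    ⟨F, hF, hFμ, ae_restrict_norm_half_smul_sub_le hγ.le hFx⟩
  obtain ⟨g, -, hg⟩ := hxs_conv K
  refine ⟨_, hg.auCauchy, G, hG, hGμ, fun n => ?_⟩
  have hdecomp := map_eq_add_half_smul_sub (ha_add n) x (xs K)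
  filter_upwards [(essSup_enorm_le_ofReal_iff (by positivity)).1 (hGy n),
    ae_restrict_of_ae (hdecomp ▸ AEEqFun.coeFn_add (a n (xs K)) (a n y + a n y)),
    ae_restrict_of_ae (AEEqFun.coeFn_add (a n y) (a n y))] with ω hyω hxω hyyω
  rw [hxω, Pi.add_apply, hyyω, Pi.add_apply, add_sub_cancel_left]
  linarith [norm_add_le ((a n y : Ω → ℂ) ω) ((a n y : Ω → ℂ) ω)]

/-- Theorem 3.7 (commutative): if a sequence of additive maps `a_n : L^∞ → L⁰` is
uniformly equicontinuous at `0` on the unit ball, then the set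
`C = { x : ‖x‖_∞ ≤ 1, (a_n(x))_n converges a.u. }` is sequentially closed in the unit
ball with respect to the measure topology. -/
theorem stmt_17 {Ω : Type*} [MeasurableSpace Ω] (μ : Measure Ω) [SigmaFinite μ]
    (a : ℕ → (Lp ℂ ⊤ μ) → (Ω →ₘ[μ] ℂ))
    (ha_add : ∀ n (x y : Lp ℂ ⊤ μ), a n (x + y) = a n x + a n y)
    (h : UnifEquicont μ a {x : Lp ℂ ⊤ μ | ‖x‖ ≤ 1})
    (xs : ℕ → Lp ℂ ⊤ μ) (x : Lp ℂ ⊤ μ)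
    (hxs_ball : ∀ k, ‖xs k‖ ≤ 1)
    (hxs_conv : ∀ k, ∃ g : Ω → ℂ, Measurable g ∧
      ConvAU μ (fun n ω => (a n (xs k) : Ω → ℂ) ω) g)
    (hx_ball : ‖x‖ ≤ 1)
    (hxs_x : TendstoMeasTop μ (fun k ω => (xs k : Ω → ℂ) ω) (fun ω => (x : Ω → ℂ) ω)) :
    ∃ g : Ω → ℂ, Measurable g ∧ ConvAU μ (fun n ω => (a n x : Ω → ℂ) ω) g :=
  stmt_17_general μ a ha_add h xs x hxs_ball hxs_conv hx_ball hxs_x
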